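/- If α = α_{i,r} is an indecomposable with i odd and 1 ≤ r ≤ u_{i+2} - 1, then N(α) > (1 - 1/u_{i+2}) √Δ. -/

import Mathlib

open Real Filter

noncomputable def omg (D : ℕ) : ℝ := if D % 4 = 1 then (1 + Real.sqrt D) / 2 else Real.sqrt D

noncomputable def omgc (D : ℕ) : ℝ := if D % 4 = 1 then (1 - Real.sqrt D) / 2 else -Real.sqrt D

noncomputable def sigmaD (D : ℕ) : ℝ := omg D + (⌊-omgc D⌋ : ℤ)

noncomputable def gam (D : ℕ) : ℕ → ℝ
  | 0 => sigmaD D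
  | n + 1 => 1 / (gam D n - ⌊gam D n⌋)

/-- partial quotients of the continued fraction of σ_D -/
noncomputable def uD (D : ℕ) (n : ℕ) : ℤ := ⌊gam D n⌋

noncomputable def emb1 (D : ℕ) (x : ℤ × ℤ) : ℝ := (x.1 : ℝ) + (x.2 : ℝ) * omg D

noncomputable def emb2 (D : ℕ) (x : ℤ × ℤ) : ℝ := (x.1 : ℝ) + (x.2 : ℝ) * omgc D

def conjp (D : ℕ) (x : ℤ × ℤ) : ℤ × ℤ := if D % 4 = 1 then (x.1 + x.2, -x.2) else (x.1, -x.2)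

def TotPos (D : ℕ) (x : ℤ × ℤ) : Prop := 0 < emb1 D x ∧ 0 < emb2 D x

def Indec (D : ℕ) (x : ℤ × ℤ) : Prop :=
  TotPos D x ∧ ¬ ∃ y z : ℤ × ℤ, TotPos D y ∧ TotPos D z ∧ x = y + z

noncomputable def Nm (D : ℕ) (x : ℤ × ℤ) : ℝ := emb1 D x * emb2 D x

noncomputable def disc (D : ℕ) : ℝ := if D % 4 = 1 then (D : ℝ) else 4 * (D : ℝ)

def UniqDec (D : ℕ) (x : ℤ × ℤ) : Prop :=
  ∃! m : Multiset (ℤ × ℤ), (∀ y ∈ m, Indec D y) ∧ m.sum = x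

/-- first real embedding of α_i = p_i - q_i ω_D' -/
noncomputable def ar (D : ℕ) (p q : ℤ → ℤ) (i : ℤ) : ℝ := (p i : ℝ) - (q i : ℝ) * omgc D

/-- second real embedding (Galois conjugate) of α_i -/
noncomputable def ac (D : ℕ) (p q : ℤ → ℤ) (i : ℤ) : ℝ := (p i : ℝ) - (q i : ℝ) * omg D

/-- first embedding of the semiconvergent α_{i,r} = α_i + r α_{i+1} -/
noncomputable def ar2 (D : ℕ) (p q : ℤ → ℤ) (i r : ℤ) : ℝ := ar D p q i + (r : ℝ) * ar D p q (i + 1)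

/-- conjugate embedding of the semiconvergent α_{i,r} -/
noncomputable def ac2 (D : ℕ) (p q : ℤ → ℤ) (i r : ℤ) : ℝ := ac D p q i + (r : ℝ) * ac D p q (i + 1)

/-- N_i = |N(α_i)| -/
noncomputable def Ni (D : ℕ) (p q : ℤ → ℤ) (i : ℤ) : ℝ := |ar D p q i * ac D p q i|

/-! Let `γ = γ_{i+2}` be the complete quotient, `u = ⌊γ⌋`, and write `α'` for the conjugate.
The recurrence gives `α'_i = -γ α'_{i+1}`, and for odd `i` the determinant identity
`q_{i+1} α'_i - q_i α'_{i+1} = 1` turns this into `-α'_{i+1} = 1 / (γ q_{i+1} + q_i)`. Hence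
`α'_{i,r} = (γ - r) / (γ q_{i+1} + q_i) > 0` and `α_{i,r} = α'_{i,r} + (q_i + r q_{i+1}) √Δ`, so
`N(α_{i,r}) > (γ - r)(q_i + r q_{i+1}) / (γ q_{i+1} + q_i) · √Δ`. For `1 ≤ r ≤ u - 1 < γ - 1`
the fraction exceeds `1 - 1/u`: `u (γ - r)(b + r a) - (u - 1)(γ a + b)` is a combination of
`a = q_{i+1} > 0` and `b = q_i ≥ 0` with positive coefficients. -/

section ContinuedFraction

variable {D : ℕ}

lemma irrational_omg (hD2 : 2 ≤ D) (hsq : Squarefree D) : Irrational (omg D) := by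
  have hsqrt : Irrational √D := by
    rw [irrational_sqrt_natCast_iff]
    rintro ⟨k, rfl⟩
    obtain rfl := Nat.isUnit_iff.1 (hsq k dvd_rfl)
    omega
  unfold omg
  split_ifs
  · simpa using (hsqrt.intCast_add 1).div_natCast two_ne_zero
  · exact hsqrt

lemma gam_succ (n : ℕ) : gam D (n + 1) = (Int.fract (gam D n))⁻¹ := one_div _

lemma irrational_gam (hD2 : 2 ≤ D) (hsq : Squarefree D) : ∀ n, Irrational (gam D n)
  | 0 => (irrational_omg hD2 hsq).add_intCast _
  | n + 1 => by
    rw [gam_succ]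
    exact ((irrational_gam hD2 hsq n).sub_intCast _).inv

lemma fract_gam_pos (hD2 : 2 ≤ D) (hsq : Squarefree D) (n : ℕ) : 0 < Int.fract (gam D n) :=
  Int.fract_pos.2 ((irrational_gam hD2 hsq n).ne_int _)

lemma one_lt_gam_succ (hD2 : 2 ≤ D) (hsq : Squarefree D) (n : ℕ) : 1 < gam D (n + 1) := by
  rw [gam_succ]
  exact (one_lt_inv₀ (fract_gam_pos hD2 hsq n)).2 (Int.fract_lt_one _)

lemma uD_lt_gam (hD2 : 2 ≤ D) (hsq : Squarefree D) (n : ℕ) : (uD D n : ℝ) < gam D n := by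
  have := fract_gam_pos hD2 hsq n
  rw [← Int.self_sub_floor] at this
  unfold uD
  linarith

lemma one_le_uD (hD2 : 2 ≤ D) (hsq : Squarefree D) {n : ℕ} (hn : n ≠ 0) : 1 ≤ uD D n := by
  obtain ⟨m, rfl⟩ := Nat.exists_eq_succ_of_ne_zero hn
  exact Int.le_floor.2 (by exact_mod_cast (one_lt_gam_succ hD2 hsq m).le)

lemma gam_sub_uD (n : ℕ) : gam D n - uD D n = (gam D (n + 1))⁻¹ := by
  rw [gam_succ, inv_inv]
  rfl

lemma fract_gam_zero : Int.fract (gam D 0) = Int.fract (omg D) :=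
  Int.fract_add_intCast _ _

lemma floor_neg_omgc : ⌊-omgc D⌋ = ⌊omg D⌋ - if D % 4 = 1 then 1 else 0 := by
  unfold omg omgc
  split_ifs
  · rw [← Int.floor_sub_one]
    ring_nf
  · simp

lemma ceil_half_uD_zero : ⌈(uD D 0 : ℚ) / 2⌉ = ⌊omg D⌋ := by
  have h : uD D 0 = ⌊omg D⌋ + ⌊-omgc D⌋ := Int.floor_add_intCast _ _
  rw [h, floor_neg_omgc, Int.ceil_eq_iff]
  split_ifs <;> push_cast <;> constructor <;> linarith

lemma omg_sub_omgc : omg D - omgc D = √(disc D) := by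
  unfold omg omgc disc
  split_ifs
  · ring
  · rw [Real.sqrt_mul (by norm_num), show (4 : ℝ) = 2 ^ 2 by norm_num,
      Real.sqrt_sq (by norm_num)]
    ring

lemma sqrt_disc_pos (hD2 : 2 ≤ D) : 0 < √(disc D) := by
  have : (2 : ℝ) ≤ D := by exact_mod_cast hD2
  unfold disc
  split_ifs <;> positivity

end ContinuedFraction

section Convergents

variable {D : ℕ} {p q : ℤ → ℤ}

lemma ac_add_two
    (hprec : ∀ i : ℤ, -1 ≤ i → p (i + 2) = uD D (i + 2).toNat * p (i + 1) + p i)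
    (hqrec : ∀ i : ℤ, -1 ≤ i → q (i + 2) = uD D (i + 2).toNat * q (i + 1) + q i)
    {i : ℤ} (hi : -1 ≤ i) :
    ac D p q (i + 2) = uD D (i + 2).toNat * ac D p q (i + 1) + ac D p q i := by
  unfold ac
  rw [hprec i hi, hqrec i hi]
  push_cast
  ring

lemma ac_eq_neg_gam_mul (hD2 : 2 ≤ D) (hsq : Squarefree D)
    (hpm1 : p (-1) = 1) (hqm1 : q (-1) = 0)
    (hp0 : p 0 = ⌈(uD D 0 : ℚ) / 2⌉) (hq0 : q 0 = 1)
    (hprec : ∀ i : ℤ, -1 ≤ i → p (i + 2) = uD D (i + 2).toNat * p (i + 1) + p i)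
    (hqrec : ∀ i : ℤ, -1 ≤ i → q (i + 2) = uD D (i + 2).toNat * q (i + 1) + q i)
    (i : ℤ) (hi : -1 ≤ i) :
    ac D p q i = -gam D (i + 2).toNat * ac D p q (i + 1) := by
  induction i, hi using Int.leInduction with
  | base =>
    have hf : Int.fract (omg D) ≠ 0 := fract_gam_zero (D := D) ▸ (fract_gam_pos hD2 hsq 0).ne'
    have h0 : ac D p q 0 = -Int.fract (omg D) := by
      rw [ac, hp0, hq0, ceil_half_uD_zero, ← Int.self_sub_floor]
      push_cast
      ring
    rw [show (-1 : ℤ) + 1 = 0 by rfl, h0, show (-1 + 2 : ℤ).toNat = 0 + 1 by rfl, gam_succ,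
      fract_gam_zero, ac, hpm1, hqm1]
    field_simp
    simp
  | succ i hi ih =>
    rw [show (i + 1 + 2).toNat = (i + 2).toNat + 1 by omega, add_assoc,
      show (1 : ℤ) + 1 = 2 by rfl, ac_add_two hprec hqrec hi, ih,
      sub_eq_iff_eq_add.1 (gam_sub_uD (i + 2).toNat)]
    have hγ : gam D ((i + 2).toNat + 1) ≠ 0 :=
      (zero_lt_one.trans (one_lt_gam_succ hD2 hsq (i + 2).toNat)).ne'
    field_simp
    ring

lemma det_convergents
    (hpm1 : p (-1) = 1) (hqm1 : q (-1) = 0) (hq0 : q 0 = 1)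
    (hprec : ∀ i : ℤ, -1 ≤ i → p (i + 2) = uD D (i + 2).toNat * p (i + 1) + p i)
    (hqrec : ∀ i : ℤ, -1 ≤ i → q (i + 2) = uD D (i + 2).toNat * q (i + 1) + q i)
    (i : ℤ) (hi : -1 ≤ i) :
    q (i + 1) * p i - q i * p (i + 1) = (-1) ^ (i + 1).toNat := by
  induction i, hi using Int.leInduction with
  | base => simp [hpm1, hqm1, hq0]
  | succ i hi ih =>
    rw [add_assoc, show (1 : ℤ) + 1 = 2 by rfl, hprec i hi, hqrec i hi,
      show (i + 2).toNat = (i + 1).toNat + 1 by omega, pow_succ]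
    linear_combination (-1 : ℤ) * ih

lemma det_ac
    (hpm1 : p (-1) = 1) (hqm1 : q (-1) = 0) (hq0 : q 0 = 1)
    (hprec : ∀ i : ℤ, -1 ≤ i → p (i + 2) = uD D (i + 2).toNat * p (i + 1) + p i)
    (hqrec : ∀ i : ℤ, -1 ≤ i → q (i + 2) = uD D (i + 2).toNat * q (i + 1) + q i)
    (i : ℤ) (hi : -1 ≤ i) :
    (q (i + 1) : ℝ) * ac D p q i - q i * ac D p q (i + 1) = (-1) ^ (i + 1).toNat := by
  have h : ((q (i + 1) * p i - q i * p (i + 1) : ℤ) : ℝ) = (-1) ^ (i + 1).toNat := by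
    exact_mod_cast det_convergents hpm1 hqm1 hq0 hprec hqrec i hi
  push_cast at h
  rw [ac, ac]
  linear_combination h

lemma q_nonneg_and_q_add_one_pos (hD2 : 2 ≤ D) (hsq : Squarefree D)
    (hqm1 : q (-1) = 0) (hq0 : q 0 = 1)
    (hqrec : ∀ i : ℤ, -1 ≤ i → q (i + 2) = uD D (i + 2).toNat * q (i + 1) + q i)
    (i : ℤ) (hi : -1 ≤ i) : 0 ≤ q i ∧ 0 < q (i + 1) := by
  induction i, hi using Int.leInduction with
  | base => simp [hqm1, hq0]
  | succ i hi ih =>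
    obtain ⟨hqi, hqi1⟩ := ih
    have hu := one_le_uD hD2 hsq (show (i + 2).toNat ≠ 0 by omega)
    rw [add_assoc, show (1 : ℤ) + 1 = 2 by rfl, hqrec i hi]
    exact ⟨hqi1.le, by nlinarith⟩

lemma ar_sub_ac (i : ℤ) : ar D p q i - ac D p q i = q i * √(disc D) := by
  rw [ar, ac, ← omg_sub_omgc]
  ring

end Convergents

section Inequality

variable {g u r a b : ℝ}

lemma sub_one_mul_lt_mul_sub_mul (hgu : u < g) (hr1 : 1 ≤ r) (hru : r ≤ u - 1)
    (ha : 0 < a) (hb : 0 ≤ b) :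
    (u - 1) * (g * a + b) < u * ((g - r) * (b + r * a)) := by
  have hcb : 0 < u * (g - r - 1) + 1 := by nlinarith
  have hca : 0 < g * (u * r - u + 1) - u * r ^ 2 := by
    have h1 : 0 < (g - u) * (u * (r - 1) + 1) := mul_pos (by linarith) (by nlinarith)
    have h2 : 0 ≤ u * ((r - 1) * (u - 1 - r)) :=
      mul_nonneg (by linarith) (mul_nonneg (by linarith) (by linarith))
    linear_combination h1 + h2
  nlinarith [mul_nonneg hb hcb.le, mul_pos ha hca]

lemma one_sub_one_div_mul_lt {δ s : ℝ} (hgu : u < g) (hr1 : 1 ≤ r) (hru : r ≤ u - 1)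
    (ha : 0 < a) (hb : 0 ≤ b) (hs : 0 < s) (hδ : δ * (g * a + b) = 1) :
    (1 - 1 / u) * s < ((g - r) * δ + (b + r * a) * s) * ((g - r) * δ) := by
  have hu : 0 < u := by linarith
  have hden : 0 < g * a + b := by nlinarith
  have hδ' : δ = (g * a + b)⁻¹ := eq_inv_of_mul_eq_one_left hδ
  calc (1 - 1 / u) * s = (u - 1) * (g * a + b) / (u * (g * a + b)) * s := by
        field_simp
    _ < u * ((g - r) * (b + r * a)) / (u * (g * a + b)) * s := by
        have key := sub_one_mul_lt_mul_sub_mul hgu hr1 hru ha hb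
        exact mul_lt_mul_of_pos_right ((div_lt_div_iff_of_pos_right (by positivity)).2 key) hs
    _ = (g - r) * δ * ((b + r * a) * s) := by
        rw [hδ']
        field_simp
    _ ≤ ((g - r) * δ + (b + r * a) * s) * ((g - r) * δ) := by
        nlinarith [sq_nonneg ((g - r) * δ)]

end Inequality

theorem stmt18 (D : ℕ)
    (hD2 : 2 ≤ D) (hsq : Squarefree D)
    (p q : ℤ → ℤ)
    (hpm1 : p (-1) = 1) (hqm1 : q (-1) = 0)
    (hp0 : p 0 = ⌈(uD D 0 : ℚ) / 2⌉) (hq0 : q 0 = 1)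
    (hprec : ∀ i : ℤ, -1 ≤ i → p (i + 2) = uD D (i + 2).toNat * p (i + 1) + p i)
    (hqrec : ∀ i : ℤ, -1 ≤ i → q (i + 2) = uD D (i + 2).toNat * q (i + 1) + q i)
    (i r : ℤ) (hi : -1 ≤ i) (hodd : Odd i)
    (hr1 : 1 ≤ r) (hr : r ≤ uD D (i + 2).toNat - 1) :
    (1 - 1 / (uD D (i + 2).toNat : ℝ)) * Real.sqrt (disc D) <
      ar2 D p q i r * ac2 D p q i r := by
  have hγ := ac_eq_neg_gam_mul hD2 hsq hpm1 hqm1 hp0 hq0 hprec hqrec i hi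
  have heven : Even (i + 1).toNat := by
    obtain ⟨m, rfl⟩ := hodd
    exact ⟨(m + 1).toNat, by omega⟩
  have hdet := det_ac hpm1 hqm1 hq0 hprec hqrec i hi
  rw [heven.neg_one_pow, hγ] at hdet
  obtain ⟨hqi, hqi1⟩ := q_nonneg_and_q_add_one_pos hD2 hsq hqm1 hq0 hqrec i hi
  have hac2 : ac2 D p q i r = (gam D (i + 2).toNat - r) * -ac D p q (i + 1) := by
    rw [ac2, hγ]
    ring
  have har2 : ar2 D p q i r = ac2 D p q i r + (q i + r * q (i + 1)) * √(disc D) := by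
    rw [ar2, ac2, eq_add_of_sub_eq (ar_sub_ac i), eq_add_of_sub_eq (ar_sub_ac (i + 1))]
    ring
  rw [har2, hac2]
  refine one_sub_one_div_mul_lt (uD_lt_gam hD2 hsq _) (by exact_mod_cast hr1)
    (by exact_mod_cast hr) (by exact_mod_cast hqi1) (by exact_mod_cast hqi) (sqrt_disc_pos hD2) ?_
  linear_combination hdet
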